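/- arXiv:2509.20145 — 4 statements merged into one kernel-verified Lean document; each statement's English description precedes it below -/
import Mathlib

section
/- In the one-step preventive replacement setting, the expected cost of replacing now is strictly smaller than the expected cost of the do-nothing branch, i.e. c_{PR@tk}(r) < c_{PR@tk+1}(r), if and only if ECTR·Δt < p_F·( c_c − c_p + ECTR·(Δt − μ) ), where μ = E[RUL | RUL ≤ Δt]. In particular, the decision criterion does not depend on the time horizon r. -/
open MeasureTheory

theorem doNothing_sub_replaceNow_cost (Δt c_p c_c ECTR p_F μ r : ℝ) :
    p_F * (c_c + ECTR * (r - μ)) + (1 - p_F) * (c_p + ECTR * (r - Δt)) - (c_p + ECTR * r) =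
      p_F * (c_c - c_p + ECTR * (Δt - μ)) - ECTR * Δt := by
  ring

theorem doa_replacement_criterion_general
    (Δt c_p c_c ECTR : ℝ)
    (p_F : ℝ)
    (μ : ℝ) :
    ∀ r : ℝ,
      c_p + ECTR * r <
          p_F * (c_c + ECTR * (r - μ)) + (1 - p_F) * (c_p + ECTR * (r - Δt)) ↔
        ECTR * Δt < p_F * (c_c - c_p + ECTR * (Δt - μ)) := by
  intro r
  rw [← sub_pos, doNothing_sub_replaceNow_cost, sub_pos]

/-- One-step preventive replacement: replacing now is strictly cheaper than the
do-nothing branch iff `ECTR·Δt < p_F·(c_c − c_p + ECTR·(Δt − μ))`, where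
`μ = E[RUL | RUL ≤ Δt]`; in particular the criterion does not depend on the
time horizon `r`. -/
theorem doa_replacement_criterion
    {Ω : Type*} [MeasurableSpace Ω] (P : Measure Ω) [IsProbabilityMeasure P]
    (RUL : Ω → ℝ) (hRUL_meas : Measurable RUL) (hRUL_nonneg : ∀ ω, 0 ≤ RUL ω)
    (hRUL_int : Integrable RUL P)
    (Δt c_p c_c ECTR : ℝ) (hΔt : 0 < Δt)
    (p_F : ℝ) (hp_F : p_F = (P {ω | RUL ω ≤ Δt}).toReal) (hp_F_pos : 0 < p_F)
    (μ : ℝ) (hμ : μ = (∫ ω in {ω | RUL ω ≤ Δt}, RUL ω ∂P) / p_F) :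
    ∀ r : ℝ,
      c_p + ECTR * r <
          p_F * (c_c + ECTR * (r - μ)) + (1 - p_F) * (c_p + ECTR * (r - Δt)) ↔
        ECTR * Δt < p_F * (c_c - c_p + ECTR * (Δt - μ)) :=
  doa_replacement_criterion_general Δt c_p c_c ECTR p_F μ
end

section
/- In the one-step preventive replacement setting, the difference of the two branch costs satisfies, for every time horizon r, c_{PR@tk+1}(r) − c_{PR@tk}(r) = p_F·(c_c − c_p) − ECTR·( E[RUL·1_{RUL ≤ Δt}] + (1 − p_F)·Δt ); in particular this difference is independent of r. -/
open MeasureTheory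

theorem branch_cost_sub_eq {R : Type*} [CommRing R] (p c_c c_p E m d r : R) :
    (p * (c_c + E * (r - m)) + (1 - p) * (c_p + E * (r - d))) - (c_p + E * r) =
      p * (c_c - c_p) - E * (p * m + (1 - p) * d) := by
  ring

theorem doa_replacement_cost_difference_general
    {Ω : Type*} [MeasurableSpace Ω] (P : Measure Ω)
    (RUL : Ω → ℝ)
    (Δt c_p c_c ECTR : ℝ)
    (p_F : ℝ) (hp_F_pos : 0 < p_F)
    (μ : ℝ) (hμ : μ = (∫ ω in {ω | RUL ω ≤ Δt}, RUL ω ∂P) / p_F) :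
    ∀ r : ℝ,
      (p_F * (c_c + ECTR * (r - μ)) + (1 - p_F) * (c_p + ECTR * (r - Δt))) -
          (c_p + ECTR * r) =
        p_F * (c_c - c_p) -
          ECTR * ((∫ ω in {ω | RUL ω ≤ Δt}, RUL ω ∂P) + (1 - p_F) * Δt) := by
  intro r
  rw [branch_cost_sub_eq, hμ, mul_div_cancel₀ _ hp_F_pos.ne']

/-- One-step preventive replacement: the difference of the two branch costs equals
`p_F·(c_c − c_p) − ECTR·(E[RUL·1_{RUL ≤ Δt}] + (1 − p_F)·Δt)` for every time
horizon `r`; in particular it is independent of `r`. -/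
theorem doa_replacement_cost_difference
    {Ω : Type*} [MeasurableSpace Ω] (P : Measure Ω) [IsProbabilityMeasure P]
    (RUL : Ω → ℝ) (hRUL_meas : Measurable RUL) (hRUL_nonneg : ∀ ω, 0 ≤ RUL ω)
    (hRUL_int : Integrable RUL P)
    (Δt c_p c_c ECTR : ℝ) (hΔt : 0 < Δt)
    (p_F : ℝ) (hp_F : p_F = (P {ω | RUL ω ≤ Δt}).toReal) (hp_F_pos : 0 < p_F)
    (μ : ℝ) (hμ : μ = (∫ ω in {ω | RUL ω ≤ Δt}, RUL ω ∂P) / p_F) :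
    ∀ r : ℝ,
      (p_F * (c_c + ECTR * (r - μ)) + (1 - p_F) * (c_p + ECTR * (r - Δt))) -
          (c_p + ECTR * r) =
        p_F * (c_c - c_p) -
          ECTR * ((∫ ω in {ω | RUL ω ≤ Δt}, RUL ω ∂P) + (1 - p_F) * Δt) :=
  doa_replacement_cost_difference_general P RUL Δt c_p c_c ECTR p_F hp_F_pos μ hμ
end

section
/- In the one-step preventive ordering setting, the expected cost of ordering now is strictly smaller than the expected cost of ordering at the next decision time, i.e. c_{O@tk}(r) < c_{O@tk+1}(r), if and only if 0 < P(RUL ≤ l)·Δt·(c_unav + c_inv − ECTR) − c_inv·Δt + P(l < RUL ≤ l + Δt)·(c_unav + c_inv − ECTR)·( l + Δt − E[RUL | l < RUL ≤ l + Δt] ). In particular, the decision criterion does not depend on the time horizon r. -/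
/-!
Both costs are affine in `r` with the same slope `ECTR`, since `P(RUL ≤ t) + P(RUL > t) = 1`,
so `r` cancels in their difference. Writing every `P(A) · E[RUL | A]` as `∫_A RUL` and splitting
`{RUL ≤ l + Δt}` and `{RUL > l}` along the window `{l < RUL ≤ l + Δt}`, the difference becomes
a linear combination of `P(RUL ≤ l)`, `P(l < RUL ≤ l + Δt)` and `∫_{l < RUL ≤ l + Δt} RUL`,
which is the criterion.
-/

open MeasureTheory Set

namespace MeasureTheory

variable {Ω : Type*} [MeasurableSpace Ω] {μ : Measure Ω}

/-- If `μ s = 0`, then `E` is a junk quotient by `0`, but the set integral vanishes as well. -/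
theorem mul_eq_setIntegral_of_eq_div [IsFiniteMeasure μ] {f : Ω → ℝ} {s : Set Ω} {p E : ℝ}
    (hp : p = μ.real s) (hE : E = (∫ ω in s, f ω ∂μ) / p) : p * E = ∫ ω in s, f ω ∂μ := by
  rw [hE, hp, div_eq_inv_mul, ← smul_eq_mul (μ.real s)⁻¹, ← setAverage_eq]
  exact measure_smul_setAverage f (measure_ne_top μ s)

variable {X : Ω → ℝ} {a b : ℝ}

theorem measureReal_setOf_le_eq_add (hX : Measurable X) [IsFiniteMeasure μ] (hab : a ≤ b) :
    μ.real {ω | X ω ≤ b} = μ.real {ω | X ω ≤ a} + μ.real {ω | a < X ω ∧ X ω ≤ b} := by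
  change μ.real (X ⁻¹' Iic b) = μ.real (X ⁻¹' Iic a) + μ.real (X ⁻¹' Ioc a b)
  rw [← Iic_union_Ioc_eq_Iic hab, preimage_union]
  exact measureReal_union ((Iic_disjoint_Ioc le_rfl).preimage X) (hX measurableSet_Ioc)

theorem measureReal_setOf_lt_eq_add (hX : Measurable X) [IsFiniteMeasure μ] (hab : a ≤ b) :
    μ.real {ω | a < X ω} = μ.real {ω | a < X ω ∧ X ω ≤ b} + μ.real {ω | b < X ω} := by
  change μ.real (X ⁻¹' Ioi a) = μ.real (X ⁻¹' Ioc a b) + μ.real (X ⁻¹' Ioi b)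
  rw [← Ioc_union_Ioi_eq_Ioi hab, preimage_union]
  exact measureReal_union ((Ioc_disjoint_Ioi le_rfl).preimage X) (hX measurableSet_Ioi)

theorem measureReal_setOf_le_add_measureReal_setOf_lt (hX : Measurable X)
    [IsProbabilityMeasure μ] :
    μ.real {ω | X ω ≤ b} + μ.real {ω | b < X ω} = 1 := by
  change μ.real (X ⁻¹' Iic b) + μ.real (X ⁻¹' Ioi b) = 1
  rw [← compl_Iic, preimage_compl, measureReal_add_measureReal_compl (hX measurableSet_Iic),
    probReal_univ]

theorem setIntegral_setOf_le_eq_add (hX : Measurable X) {f : Ω → ℝ} (hf : Integrable f μ)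
    (hab : a ≤ b) :
    ∫ ω in {ω | X ω ≤ b}, f ω ∂μ =
      (∫ ω in {ω | X ω ≤ a}, f ω ∂μ) + ∫ ω in {ω | a < X ω ∧ X ω ≤ b}, f ω ∂μ := by
  change ∫ ω in X ⁻¹' Iic b, f ω ∂μ =
    (∫ ω in X ⁻¹' Iic a, f ω ∂μ) + ∫ ω in X ⁻¹' Ioc a b, f ω ∂μ
  rw [← Iic_union_Ioc_eq_Iic hab, preimage_union]
  exact setIntegral_union ((Iic_disjoint_Ioc le_rfl).preimage X) (hX measurableSet_Ioc)
    hf.integrableOn hf.integrableOn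

theorem setIntegral_setOf_lt_eq_add (hX : Measurable X) {f : Ω → ℝ} (hf : Integrable f μ)
    (hab : a ≤ b) :
    ∫ ω in {ω | a < X ω}, f ω ∂μ =
      (∫ ω in {ω | a < X ω ∧ X ω ≤ b}, f ω ∂μ) + ∫ ω in {ω | b < X ω}, f ω ∂μ := by
  change ∫ ω in X ⁻¹' Ioi a, f ω ∂μ =
    (∫ ω in X ⁻¹' Ioc a b, f ω ∂μ) + ∫ ω in X ⁻¹' Ioi b, f ω ∂μ
  rw [← Ioc_union_Ioi_eq_Ioi hab, preimage_union]
  exact setIntegral_union ((Ioc_disjoint_Ioi le_rfl).preimage X) (hX measurableSet_Ioi)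
    hf.integrableOn hf.integrableOn

end MeasureTheory

theorem doa_ordering_criterion_general
    {Ω : Type*} [MeasurableSpace Ω] (P : Measure Ω) [IsProbabilityMeasure P]
    (RUL : Ω → ℝ) (hRUL_meas : Measurable RUL)
    (hRUL_int : Integrable RUL P)
    (Δt l c_inv c_unav ECTR : ℝ) (hΔt : 0 < Δt)
    (p_le_l : ℝ) (hp_le_l : p_le_l = (P {ω | RUL ω ≤ l}).toReal)
    (p_gt_l : ℝ) (hp_gt_l : p_gt_l = (P {ω | l < RUL ω}).toReal)
    (p_le_lΔ : ℝ) (hp_le_lΔ : p_le_lΔ = (P {ω | RUL ω ≤ l + Δt}).toReal)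
    (p_gt_lΔ : ℝ) (hp_gt_lΔ : p_gt_lΔ = (P {ω | l + Δt < RUL ω}).toReal)
    (p_mid : ℝ) (hp_mid : p_mid = (P {ω | l < RUL ω ∧ RUL ω ≤ l + Δt}).toReal)
    (E_le_l : ℝ) (hE_le_l : E_le_l = (∫ ω in {ω | RUL ω ≤ l}, RUL ω ∂P) / p_le_l)
    (E_gt_l : ℝ) (hE_gt_l : E_gt_l = (∫ ω in {ω | l < RUL ω}, RUL ω ∂P) / p_gt_l)
    (E_le_lΔ : ℝ)
    (hE_le_lΔ : E_le_lΔ = (∫ ω in {ω | RUL ω ≤ l + Δt}, RUL ω ∂P) / p_le_lΔ)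
    (E_gt_lΔ : ℝ)
    (hE_gt_lΔ : E_gt_lΔ = (∫ ω in {ω | l + Δt < RUL ω}, RUL ω ∂P) / p_gt_lΔ)
    (E_mid : ℝ)
    (hE_mid : E_mid = (∫ ω in {ω | l < RUL ω ∧ RUL ω ≤ l + Δt}, RUL ω ∂P) / p_mid) :
    ∀ r : ℝ,
      p_le_l * ((l - E_le_l) * c_unav + ECTR * (r - l)) +
            p_gt_l * ((E_gt_l - l) * c_inv + ECTR * (r - E_gt_l)) <
          p_le_lΔ * ((l + Δt - E_le_lΔ) * c_unav + ECTR * (r - l - Δt)) +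
            p_gt_lΔ * ((E_gt_lΔ - l - Δt) * c_inv + ECTR * (r - E_gt_lΔ)) ↔
        0 < p_le_l * Δt * (c_unav + c_inv - ECTR) - c_inv * Δt +
              p_mid * (c_unav + c_inv - ECTR) * (l + Δt - E_mid) := by
  intro r
  have hlΔ : l ≤ l + Δt := by linarith
  have hp_split_le : p_le_lΔ = p_le_l + p_mid := by
    rw [hp_le_lΔ, hp_le_l, hp_mid]; exact measureReal_setOf_le_eq_add hRUL_meas hlΔ
  have hp_split_gt : p_gt_l = p_mid + p_gt_lΔ := by
    rw [hp_gt_l, hp_mid, hp_gt_lΔ]; exact measureReal_setOf_lt_eq_add hRUL_meas hlΔ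
  have hp_total : p_le_lΔ + p_gt_lΔ = 1 := by
    rw [hp_le_lΔ, hp_gt_lΔ]; exact measureReal_setOf_le_add_measureReal_setOf_lt hRUL_meas
  have hI_split_le := setIntegral_setOf_le_eq_add hRUL_meas hRUL_int hlΔ
  have hI_split_gt := setIntegral_setOf_lt_eq_add hRUL_meas hRUL_int hlΔ
  have hX_le_l := mul_eq_setIntegral_of_eq_div hp_le_l hE_le_l
  have hX_gt_l := mul_eq_setIntegral_of_eq_div hp_gt_l hE_gt_l
  have hX_le_lΔ := mul_eq_setIntegral_of_eq_div hp_le_lΔ hE_le_lΔ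
  have hX_gt_lΔ := mul_eq_setIntegral_of_eq_div hp_gt_lΔ hE_gt_lΔ
  have hX_mid := mul_eq_setIntegral_of_eq_div hp_mid hE_mid
  have hcost_sub :
      (p_le_lΔ * ((l + Δt - E_le_lΔ) * c_unav + ECTR * (r - l - Δt)) +
        p_gt_lΔ * ((E_gt_lΔ - l - Δt) * c_inv + ECTR * (r - E_gt_lΔ))) -
      (p_le_l * ((l - E_le_l) * c_unav + ECTR * (r - l)) +
        p_gt_l * ((E_gt_l - l) * c_inv + ECTR * (r - E_gt_l))) =
      p_le_l * Δt * (c_unav + c_inv - ECTR) - c_inv * Δt +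
        p_mid * (c_unav + c_inv - ECTR) * (l + Δt - E_mid) := by
    linear_combination
      ((l + Δt) * (c_unav - ECTR) + ECTR * r + c_inv * Δt) * hp_split_le +
      (l * c_inv - ECTR * r) * hp_split_gt - c_inv * Δt * hp_total +
      c_unav * hX_le_l + (ECTR - c_inv) * hX_gt_l - c_unav * hX_le_lΔ +
      (c_inv - ECTR) * hX_gt_lΔ + (c_unav + c_inv - ECTR) * hX_mid -
      c_unav * hI_split_le + (ECTR - c_inv) * hI_split_gt
  rw [← sub_pos, hcost_sub]

/-- One-step preventive ordering: ordering now is strictly cheaper than ordering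
at the next decision time iff
`0 < P(RUL ≤ l)·Δt·(c_unav + c_inv − ECTR) − c_inv·Δt
   + P(l < RUL ≤ l+Δt)·(c_unav + c_inv − ECTR)·(l + Δt − E[RUL | l < RUL ≤ l+Δt])`;
in particular the criterion does not depend on the time horizon `r`. -/
theorem doa_ordering_criterion
    {Ω : Type*} [MeasurableSpace Ω] (P : Measure Ω) [IsProbabilityMeasure P]
    (RUL : Ω → ℝ) (hRUL_meas : Measurable RUL) (hRUL_nonneg : ∀ ω, 0 ≤ RUL ω)
    (hRUL_int : Integrable RUL P)
    (Δt l c_inv c_unav ECTR : ℝ) (hΔt : 0 < Δt) (hl : 0 < l)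
    (p_le_l : ℝ) (hp_le_l : p_le_l = (P {ω | RUL ω ≤ l}).toReal)
    (p_gt_l : ℝ) (hp_gt_l : p_gt_l = (P {ω | l < RUL ω}).toReal)
    (p_le_lΔ : ℝ) (hp_le_lΔ : p_le_lΔ = (P {ω | RUL ω ≤ l + Δt}).toReal)
    (p_gt_lΔ : ℝ) (hp_gt_lΔ : p_gt_lΔ = (P {ω | l + Δt < RUL ω}).toReal)
    (p_mid : ℝ) (hp_mid : p_mid = (P {ω | l < RUL ω ∧ RUL ω ≤ l + Δt}).toReal)
    (hp_le_l_pos : 0 < p_le_l) (hp_le_lΔ_lt_one : p_le_lΔ < 1) (hp_mid_pos : 0 < p_mid)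
    (E_le_l : ℝ) (hE_le_l : E_le_l = (∫ ω in {ω | RUL ω ≤ l}, RUL ω ∂P) / p_le_l)
    (E_gt_l : ℝ) (hE_gt_l : E_gt_l = (∫ ω in {ω | l < RUL ω}, RUL ω ∂P) / p_gt_l)
    (E_le_lΔ : ℝ)
    (hE_le_lΔ : E_le_lΔ = (∫ ω in {ω | RUL ω ≤ l + Δt}, RUL ω ∂P) / p_le_lΔ)
    (E_gt_lΔ : ℝ)
    (hE_gt_lΔ : E_gt_lΔ = (∫ ω in {ω | l + Δt < RUL ω}, RUL ω ∂P) / p_gt_lΔ)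
    (E_mid : ℝ)
    (hE_mid : E_mid = (∫ ω in {ω | l < RUL ω ∧ RUL ω ≤ l + Δt}, RUL ω ∂P) / p_mid) :
    ∀ r : ℝ,
      p_le_l * ((l - E_le_l) * c_unav + ECTR * (r - l)) +
            p_gt_l * ((E_gt_l - l) * c_inv + ECTR * (r - E_gt_l)) <
          p_le_lΔ * ((l + Δt - E_le_lΔ) * c_unav + ECTR * (r - l - Δt)) +
            p_gt_lΔ * ((E_gt_lΔ - l - Δt) * c_inv + ECTR * (r - E_gt_lΔ)) ↔
        0 < p_le_l * Δt * (c_unav + c_inv - ECTR) - c_inv * Δt +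
              p_mid * (c_unav + c_inv - ECTR) * (l + Δt - E_mid) :=
  doa_ordering_criterion_general P RUL hRUL_meas hRUL_int Δt l c_inv c_unav ECTR hΔt p_le_l hp_le_l
    p_gt_l hp_gt_l p_le_lΔ hp_le_lΔ p_gt_lΔ hp_gt_lΔ p_mid hp_mid E_le_l hE_le_l E_gt_l hE_gt_l
    E_le_lΔ hE_le_lΔ E_gt_lΔ hE_gt_lΔ E_mid hE_mid
end

section
/- Let Δt > 0 and c_inv, c_unav > 0 be real numbers, and let T be a random variable uniformly distributed on [0, Δt]. Then the expected minimal per-cycle ordering cost satisfies E[ min( T·c_inv, (Δt − T)·c_unav ) ] = (1/Δt)·∫_0^{Δt} min( t·c_inv, (Δt − t)·c_unav ) dt = ( c_inv·c_unav / (2·(c_inv + c_unav)) )·Δt. -/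
/-!
Since `T` is uniform, the expectation is the average of the cost over `[0, Δt]`. The cost is a
tent: it equals `t·c_inv` up to the point `m = Δt·c_unav/(c_inv + c_unav)` where the two costs
cross, and `(Δt - t)·c_unav` after it, so its integral is the area `Δt·(m·c_inv)/2` of a triangle.
-/

open MeasureTheory

theorem MeasureTheory.pdf.IsUniform.integral_comp {Ω E F : Type*} [MeasurableSpace Ω]
    [MeasurableSpace E] [NormedAddCommGroup F] [NormedSpace ℝ F] {P : Measure Ω}
    {μ : Measure E} {X : Ω → E} {s : Set E} (hns : μ s ≠ 0) (hnt : μ s ≠ ⊤)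
    (hu : pdf.IsUniform X s P μ) {f : E → F} (hf : AEStronglyMeasurable f (μ.restrict s)) :
    ∫ ω, f (X ω) ∂P = (μ s)⁻¹.toReal • ∫ x in s, f x ∂μ := by
  have hmap : P.map X = (μ s)⁻¹ • μ.restrict s := hu
  rw [← integral_smul_measure, ← hmap]
  exact (integral_map (hu.aemeasurable hns hnt) (hmap ▸ hf.smul_measure _)).symm

theorem MeasureTheory.pdf.IsUniform.integral_comp_Icc {Ω : Type*} [MeasurableSpace Ω]
    {P : Measure Ω} {X : Ω → ℝ} {a b : ℝ} (hab : a < b) (hu : pdf.IsUniform X (Set.Icc a b) P)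
    {f : ℝ → ℝ} (hf : ContinuousOn f (Set.Icc a b)) :
    ∫ ω, f (X ω) ∂P = (b - a)⁻¹ * ∫ x in a..b, f x := by
  have hvol : volume (Set.Icc a b) = ENNReal.ofReal (b - a) := Real.volume_Icc
  rw [hu.integral_comp (by simpa [hvol] using hab) (by simp [hvol])
      (hf.aestronglyMeasurable measurableSet_Icc),
    intervalIntegral.integral_of_le hab.le, ← integral_Icc_eq_integral_Ioc, hvol,
    ENNReal.toReal_inv, ENNReal.toReal_ofReal (sub_nonneg.2 hab.le), smul_eq_mul]

theorem integral_min_mul_sub_mul {a b Δ : ℝ} (ha : 0 ≤ a) (hb : 0 ≤ b) (hab : 0 < a + b)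
    (hΔ : 0 ≤ Δ) :
    ∫ t in (0 : ℝ)..Δ, min (t * a) ((Δ - t) * b) = a * b / (2 * (a + b)) * Δ ^ 2 := by
  set m := Δ * b / (a + b) with hm
  have hm_nonneg : 0 ≤ m := by positivity
  have hm_le : m ≤ Δ := by
    rw [hm, div_le_iff₀ hab]; nlinarith
  have hleft_le (t : ℝ) (ht : t ≤ m) : t * a ≤ (Δ - t) * b := by
    rw [hm, le_div_iff₀ hab] at ht; linarith
  have hright_le (t : ℝ) (ht : m ≤ t) : (Δ - t) * b ≤ t * a := by
    rw [hm, div_le_iff₀ hab] at ht; linarith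
  have hleft : ∫ t in (0 : ℝ)..m, min (t * a) ((Δ - t) * b) = ∫ t in (0 : ℝ)..m, t * a := by
    refine intervalIntegral.integral_congr fun t ht => ?_
    rw [Set.uIcc_of_le hm_nonneg] at ht
    exact min_eq_left (hleft_le t ht.2)
  have hright : ∫ t in m..Δ, min (t * a) ((Δ - t) * b) = ∫ t in m..Δ, (Δ - t) * b := by
    refine intervalIntegral.integral_congr fun t ht => ?_
    rw [Set.uIcc_of_le hm_le] at ht
    exact min_eq_right (hright_le t ht.1)
  have hcont : Continuous fun t => min (t * a) ((Δ - t) * b) := by fun_prop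
  rw [← intervalIntegral.integral_add_adjacent_intervals (b := m) (hcont.intervalIntegrable _ _)
      (hcont.intervalIntegrable _ _), hleft, hright, intervalIntegral.integral_mul_const,
    intervalIntegral.integral_mul_const, integral_id, intervalIntegral.integral_sub
      intervalIntegrable_const intervalIntegral.intervalIntegrable_id,
    intervalIntegral.integral_const, integral_id, smul_eq_mul, hm]
  field_simp
  ring

theorem expected_perfect_ordering_cost_general
    {Ω : Type*} [MeasurableSpace Ω] (P : Measure Ω)
    (Δt c_inv c_unav : ℝ) (hΔt : 0 < Δt) (hci : 0 < c_inv) (hcu : 0 < c_unav)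
    (T : Ω → ℝ) (hT : pdf.IsUniform T (Set.Icc 0 Δt) P) :
    (∫ ω, min (T ω * c_inv) ((Δt - T ω) * c_unav) ∂P) =
        (1 / Δt) * ∫ t in (0 : ℝ)..Δt, min (t * c_inv) ((Δt - t) * c_unav) ∧
      (1 / Δt) * (∫ t in (0 : ℝ)..Δt, min (t * c_inv) ((Δt - t) * c_unav)) =
        (c_inv * c_unav / (2 * (c_inv + c_unav))) * Δt := by
  constructor
  · rw [hT.integral_comp_Icc (f := fun t => min (t * c_inv) ((Δt - t) * c_unav)) hΔt
      (by fun_prop), sub_zero, one_div]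
  · rw [integral_min_mul_sub_mul hci.le hcu.le (add_pos hci hcu) hΔt.le]
    field_simp

/-- For a failure phase `T` uniformly distributed on `[0, Δt]`, the expected minimal
per-cycle ordering cost equals `(1/Δt)·∫_0^{Δt} min(t·c_inv, (Δt−t)·c_unav) dt`,
which equals `(c_inv·c_unav / (2·(c_inv + c_unav)))·Δt`. -/
theorem expected_perfect_ordering_cost
    {Ω : Type*} [MeasurableSpace Ω] (P : Measure Ω) [IsProbabilityMeasure P]
    (Δt c_inv c_unav : ℝ) (hΔt : 0 < Δt) (hci : 0 < c_inv) (hcu : 0 < c_unav)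
    (T : Ω → ℝ) (hT : pdf.IsUniform T (Set.Icc 0 Δt) P) :
    (∫ ω, min (T ω * c_inv) ((Δt - T ω) * c_unav) ∂P) =
        (1 / Δt) * ∫ t in (0 : ℝ)..Δt, min (t * c_inv) ((Δt - t) * c_unav) ∧
      (1 / Δt) * (∫ t in (0 : ℝ)..Δt, min (t * c_inv) ((Δt - t) * c_unav)) =
        (c_inv * c_unav / (2 * (c_inv + c_unav))) * Δt :=
  expected_perfect_ordering_cost_general P Δt c_inv c_unav hΔt hci hcu T hT
end
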